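/- Let ABCD be a convex quadrilateral in the Euclidean plane whose diagonals meet at a point O, where A, O, B are not collinear, and let φ = ∠AOB. Then dist B C + dist A D > (1 − φ/π) · (dist A C + dist B D). -/

import Mathlib

/-!
The diagonals cut `ABCD` into triangles with apex `O`; the triangles `BOC` and `AOD` both have
apex angle `π - φ`. In a triangle with sides `p, q` at an apex of angle `θ`, the opposite side is
at least `(p + q) sin (θ / 2)`, and Jordan's inequality `sin x > 2x/π` on `(0, π/2)` turns this
into `(θ / π)(p + q)`. Adding the bounds for `BC` and `AD` gives the claim, because the four sides
at `O` add up to `AC + BD`.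
-/

open Real EuclideanGeometry

namespace EuclideanGeometry

variable {V P : Type*} [NormedAddCommGroup V] [InnerProductSpace ℝ V] [MetricSpace P]
  [NormedAddTorsor V P]

theorem law_cos_half_angle (p₁ p₂ p₃ : P) :
    dist p₁ p₃ ^ 2 =
      (dist p₁ p₂ + dist p₃ p₂) ^ 2 * sin (∠ p₁ p₂ p₃ / 2) ^ 2 +
        (dist p₁ p₂ - dist p₃ p₂) ^ 2 * cos (∠ p₁ p₂ p₃ / 2) ^ 2 := by
  have hcos : cos (∠ p₁ p₂ p₃) = cos (∠ p₁ p₂ p₃ / 2) ^ 2 - sin (∠ p₁ p₂ p₃ / 2) ^ 2 := by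
    rw [← cos_two_mul', mul_div_cancel₀ _ two_ne_zero]
  linear_combination law_cos p₁ p₂ p₃ - 2 * dist p₁ p₂ * dist p₃ p₂ * hcos -
    (dist p₁ p₂ ^ 2 + dist p₃ p₂ ^ 2) * sin_sq_add_cos_sq (∠ p₁ p₂ p₃ / 2)

theorem dist_add_dist_mul_sin_half_angle_le (p₁ p₂ p₃ : P) :
    (dist p₁ p₂ + dist p₃ p₂) * sin (∠ p₁ p₂ p₃ / 2) ≤ dist p₁ p₃ := by
  refine abs_le_of_sq_le_sq' ?_ dist_nonneg |>.2
  rw [law_cos_half_angle p₁ p₂ p₃, mul_pow]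
  exact le_add_of_nonneg_right (by positivity)

theorem angle_div_pi_mul_add_dist_lt_dist {p₁ p₂ p₃ : P} (h : p₁ ≠ p₂)
    (h₀ : 0 < ∠ p₁ p₂ p₃) (hπ : ∠ p₁ p₂ p₃ < π) :
    ∠ p₁ p₂ p₃ / π * (dist p₁ p₂ + dist p₃ p₂) < dist p₁ p₃ := by
  have hsum : 0 < dist p₁ p₂ + dist p₃ p₂ := add_pos_of_pos_of_nonneg (dist_pos.2 h) dist_nonneg
  calc ∠ p₁ p₂ p₃ / π * (dist p₁ p₂ + dist p₃ p₂)
      = 2 / π * (∠ p₁ p₂ p₃ / 2) * (dist p₁ p₂ + dist p₃ p₂) := by ring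
    _ < sin (∠ p₁ p₂ p₃ / 2) * (dist p₁ p₂ + dist p₃ p₂) := by
      gcongr
      exact mul_lt_sin (by positivity) (by linarith)
    _ ≤ dist p₁ p₃ := by
      rw [mul_comm]
      exact dist_add_dist_mul_sin_half_angle_le p₁ p₂ p₃

end EuclideanGeometry

/-- For a convex quadrilateral `ABCD` in the plane whose diagonals meet at `O`, with
`φ = ∠AOB`, one has `BC + AD > (1 − φ/π)(AC + BD)`. -/
theorem diagonal_estimate_two (A B C D O : EuclideanSpace ℝ (Fin 2))
    (hAOC : Sbtw ℝ A O C) (hBOD : Sbtw ℝ B O D)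
    (hncol : ¬ Collinear ℝ ({A, O, B} : Set (EuclideanSpace ℝ (Fin 2)))) :
    dist B C + dist A D > (1 - ∠ A O B / π) * (dist A C + dist B D) := by
  have hφ₀ := angle_pos_of_not_collinear hncol
  have hφπ := angle_lt_pi_of_not_collinear hncol
  have hBOC : ∠ B O C = π - ∠ A O B := by
    linarith [angle_add_angle_eq_pi_of_angle_eq_pi B hAOC.angle₁₂₃_eq_pi, angle_comm B O A]
  have hAOD : ∠ A O D = π - ∠ A O B := by
    linarith [angle_add_angle_eq_pi_of_angle_eq_pi A hBOD.angle₁₂₃_eq_pi]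
  have hBC := angle_div_pi_mul_add_dist_lt_dist hBOD.left_ne (by linarith) (by linarith)
  have hAD := angle_div_pi_mul_add_dist_lt_dist hAOC.left_ne (by linarith) (by linarith)
  rw [hBOC, sub_div, div_self pi_ne_zero] at hBC
  rw [hAOD, sub_div, div_self pi_ne_zero] at hAD
  rw [← hAOC.wbtw.dist_add_dist, ← hBOD.wbtw.dist_add_dist, dist_comm O C, dist_comm O D]
  linarith
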